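/- Let a < b be real numbers and let f_1, f_2 : [a,b] × ℝ × ℝ → ℝ be continuous with continuous partial derivatives f_{1y}, f_{1v}, f_{2y}, f_{2v} with respect to their second and third arguments. Suppose x̃ : [a,b] → ℝ is C¹ with x̃(b) = x_b (the value x(a) is not specified), and x̃ is a weak local extremizer of the product functional L[x] = F_1[x] · F_2[x]: there exists δ > 0 such that L[x̃] ≤ L[x] for every C¹ function x with x(b) = x_b and ‖x − x̃‖₁ < δ (or L[x̃] ≥ L[x] for all such x). Then the natural boundary condition F_2[x̃] · f_{1v}(a, x̃(a), x̃'(a)) + F_1[x̃] · f_{2v}(a, x̃(a), x̃'(a)) = 0 holds. -/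

import Mathlib

/-!
Perturb `xE` by `ε η`, where `η` is `C¹` with `η b = 0` but `η a` arbitrary, as `x(a)` is free.
Since `‖ε η‖₁ = |ε| ‖η‖₁`, these are admissible competitors for small `ε`, so `ε ↦ L[xE + ε η]`
has a local extremum at `0` and its derivative there vanishes: `∫ₐᵇ (g η + h η') = 0`, where
`g = F₂ f₁y + F₁ f₂y` and `h = F₂ f₁v + F₁ f₂v` are evaluated along `xE`.
With `A = ∫ₐ g` and `ψ = h - A`, integration by parts (whose boundary terms vanish since
`A a = 0 = η b`) turns this into `∫ₐᵇ ψ η' = 0`. The choice `η = ∫_b ψ` gives `∫ₐᵇ ψ² = 0`,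
so `ψ a = 0`, that is `h a = A a = 0`.
-/

/-- The C¹-norm ‖x‖₁ = sup_{t∈[a,b]} |x(t)| + sup_{t∈[a,b]} |x'(t)|. -/
noncomputable def C1Norm (a b : ℝ) (x : ℝ → ℝ) : ℝ :=
  (⨆ t : Set.Icc a b, |x t|) + (⨆ t : Set.Icc a b, |derivWithin x (Set.Icc a b) t|)

open Set Filter Topology MeasureTheory Metric ContinuousLinearMap Interval

theorem HasDerivAt.comp_of_continuous_partials {g gy gv : ℝ → ℝ → ℝ}
    (hy : ∀ y v, HasDerivAt (g · v) (gy y v) y) (hv : ∀ y v, HasDerivAt (g y ·) (gv y v) v)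
    (hgy : Continuous fun p : ℝ × ℝ => gy p.1 p.2) (hgv : Continuous fun p : ℝ × ℝ => gv p.1 p.2)
    {Y V : ℝ → ℝ} {Y' V' s : ℝ} (hY : HasDerivAt Y Y' s) (hV : HasDerivAt V V' s) :
    HasDerivAt (fun s => g (Y s) (V s)) (gy (Y s) (V s) * Y' + gv (Y s) (V s) * V') s := by
  have hcont (k : ℝ → ℝ → ℝ) (hk : Continuous fun p : ℝ × ℝ => k p.1 p.2) :
      Continuous fun p : ℝ × ℝ => toSpanSingleton ℝ (k p.1 p.2) :=
    (toSpanSingletonLIE ℝ ℝ).continuous.comp hk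
  have hg : HasFDerivAt (fun p : ℝ × ℝ => g p.1 p.2)
      ((toSpanSingleton ℝ (gy (Y s) (V s))).coprod (toSpanSingleton ℝ (gv (Y s) (V s))))
      (Y s, V s) :=
    (hasStrictFDerivAt_uncurry_coprod (u := (Y s, V s))
      (f₁ := fun y v => toSpanSingleton ℝ (gy y v)) (f₂ := fun y v => toSpanSingleton ℝ (gv y v))
      (.of_forall fun p => hy p.1 p.2)
      (.of_forall fun p => hv p.1 p.2) (hcont gy hgy).continuousAt
      (hcont gv hgv).continuousAt).hasFDerivAt
  refine (hg.comp_hasDerivAt s (hY.prodMk hV)).congr_deriv ?_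
  simp [mul_comm]

theorem ContinuousOn.exists_continuous_eqOn_Icc {α β : Type*} [LinearOrder α]
    [TopologicalSpace α] [OrderTopology α] [TopologicalSpace β] {a b : α} (hab : a ≤ b)
    {g : α → β} (hg : ContinuousOn g (Icc a b)) :
    ∃ G : α → β, Continuous G ∧ EqOn G g (Icc a b) :=
  ⟨IccExtend hab ((Icc a b).domRestrict g), hg.domRestrict.Icc_extend',
    fun _ ht => IccExtend_of_mem hab _ ht⟩

theorem ContinuousOn.eqOn_zero_of_integral_eq_zero_of_nonneg {a b : ℝ} (hab : a < b)
    {g : ℝ → ℝ} (hg : ContinuousOn g (Icc a b)) (hg0 : ∀ t ∈ Icc a b, 0 ≤ g t)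
    (h : ∫ t in a..b, g t = 0) : EqOn g 0 (Icc a b) := by
  have hg0' : 0 ≤ᵐ[volume.restrict (Ioc a b)] g :=
    (ae_restrict_iff' measurableSet_Ioc).mpr
      (.of_forall fun t ht => hg0 t (Ioc_subset_Icc_self ht))
  rw [intervalIntegral.integral_eq_zero_iff_of_le_of_nonneg_ae hab.le hg0'
    (hg.intervalIntegrable_of_Icc hab.le), Measure.restrict_congr_set Ioc_ae_eq_Icc] at h
  exact Measure.eqOn_Icc_of_ae_eq volume hab.ne h hg continuousOn_const

/-- The boundary lemma of du Bois-Reymond type for a free left endpoint. -/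
theorem eq_zero_left_of_integral_mul_add_mul_deriv_eq_zero {a b : ℝ} (hab : a < b)
    {g h : ℝ → ℝ} (hg : ContinuousOn g (Icc a b)) (hh : ContinuousOn h (Icc a b))
    (H : ∀ η : ℝ → ℝ, ContDiff ℝ 1 η → η b = 0 →
      ∫ t in a..b, (g t * η t + h t * deriv η t) = 0) :
    h a = 0 := by
  obtain ⟨G, hG, hGg⟩ := hg.exists_continuous_eqOn_Icc hab.le
  obtain ⟨K, hK, hKh⟩ := hh.exists_continuous_eqOn_Icc hab.le
  set A : ℝ → ℝ := fun t => ∫ s in a..t, G s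
  have hA (t : ℝ) : HasDerivAt A (G t) t := (hG.integral_hasStrictDerivAt a t).hasDerivAt
  have hAc : Continuous A := continuous_iff_continuousAt.mpr fun t => (hA t).continuousAt
  set ψ : ℝ → ℝ := fun t => K t - A t
  have hψ : Continuous ψ := hK.sub hAc
  set η : ℝ → ℝ := fun t => ∫ s in b..t, ψ s
  have hη (t : ℝ) : HasDerivAt η (ψ t) t := (hψ.integral_hasStrictDerivAt b t).hasDerivAt
  have hη' : deriv η = ψ := funext fun t => (hη t).deriv
  have hηC1 : ContDiff ℝ 1 η :=
    contDiff_one_iff_deriv.mpr ⟨fun t => (hη t).differentiableAt, hη' ▸ hψ⟩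
  have hvar : ∫ t in a..b, (η t * G t + ψ t * K t) = 0 := by
    rw [← H η hηC1 intervalIntegral.integral_same]
    refine intervalIntegral.integral_congr fun t ht => ?_
    rw [uIcc_of_le hab.le] at ht
    simp only [hη', hGg ht, hKh ht]
    ring
  have hparts : ∫ t in a..b, η t * G t = -∫ t in a..b, ψ t * A t := by
    rw [intervalIntegral.integral_mul_deriv_eq_deriv_mul (fun t _ => hη t) (fun t _ => hA t)
      (hψ.intervalIntegrable a b) (hG.intervalIntegrable a b)]
    simp [η, A]
  have hint {u v : ℝ → ℝ} (hu : Continuous u) (hv : Continuous v) :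
      IntervalIntegrable (fun t => u t * v t) volume a b := (hu.mul hv).intervalIntegrable a b
  have hsq : ∫ t in a..b, ψ t * ψ t = 0 :=
    calc ∫ t in a..b, ψ t * ψ t = ∫ t in a..b, (ψ t * K t - ψ t * A t) := by
          simp only [ψ, mul_sub]
      _ = ∫ t in a..b, (η t * G t + ψ t * K t) := by
          rw [intervalIntegral.integral_sub (hint hψ hK) (hint hψ hAc),
            intervalIntegral.integral_add (hint hηC1.continuous hG) (hint hψ hK), hparts]
          ring
      _ = 0 := hvar
  have hψa : ψ a = 0 := mul_self_eq_zero.mp <|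
    (hψ.mul hψ).continuousOn.eqOn_zero_of_integral_eq_zero_of_nonneg hab
      (fun t _ => mul_self_nonneg (ψ t)) hsq ⟨le_rfl, hab.le⟩
  simpa [ψ, A, hKh ⟨le_rfl, hab.le⟩] using hψa

structure HasContinuousPartials (a b : ℝ) (f fy fv : ℝ → ℝ → ℝ → ℝ) : Prop where
  continuousOn : ContinuousOn (fun p : ℝ × ℝ × ℝ => f p.1 p.2.1 p.2.2) (Icc a b ×ˢ univ ×ˢ univ)
  hasDerivAt_y : ∀ t ∈ Icc a b, ∀ y v, HasDerivAt (fun y' => f t y' v) (fy t y v) y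
  hasDerivAt_v : ∀ t ∈ Icc a b, ∀ y v, HasDerivAt (fun v' => f t y v') (fv t y v) v
  continuousOn_y : ContinuousOn (fun p : ℝ × ℝ × ℝ => fy p.1 p.2.1 p.2.2) (Icc a b ×ˢ univ ×ˢ univ)
  continuousOn_v : ContinuousOn (fun p : ℝ × ℝ × ℝ => fv p.1 p.2.1 p.2.2) (Icc a b ×ˢ univ ×ˢ univ)

noncomputable def integralFunctional (a b : ℝ) (f : ℝ → ℝ → ℝ → ℝ) (x : ℝ → ℝ) : ℝ :=
  ∫ t in a..b, f t (x t) (derivWithin x (Icc a b) t)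

section Lagrangian

variable {a b : ℝ} {f fy fv : ℝ → ℝ → ℝ → ℝ}

theorem ContinuousOn.comp_of_mapsTo_Icc {α : Type*} [TopologicalSpace α]
    (hf : ContinuousOn (fun p : ℝ × ℝ × ℝ => f p.1 p.2.1 p.2.2) (Icc a b ×ˢ univ ×ˢ univ))
    {s : Set α} {T Y V : α → ℝ} (hT : ContinuousOn T s) (hTs : MapsTo T s (Icc a b))
    (hY : ContinuousOn Y s) (hV : ContinuousOn V s) :
    ContinuousOn (fun z => f (T z) (Y z) (V z)) s :=
  hf.comp (hT.prodMk (hY.prodMk hV)) fun _ hz => ⟨hTs hz, trivial, trivial⟩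

theorem ContinuousOn.comp_curve_Icc
    (hf : ContinuousOn (fun p : ℝ × ℝ × ℝ => f p.1 p.2.1 p.2.2) (Icc a b ×ˢ univ ×ˢ univ))
    {Y V : ℝ → ℝ} (hY : ContinuousOn Y (Icc a b)) (hV : ContinuousOn V (Icc a b)) :
    ContinuousOn (fun t => f t (Y t) (V t)) (Icc a b) :=
  hf.comp_of_mapsTo_Icc continuousOn_id (mapsTo_id _) hY hV

theorem ContinuousOn.continuous_slice_of_mem_Icc
    (hf : ContinuousOn (fun p : ℝ × ℝ × ℝ => f p.1 p.2.1 p.2.2) (Icc a b ×ˢ univ ×ˢ univ))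
    {t : ℝ} (ht : t ∈ Icc a b) : Continuous fun p : ℝ × ℝ => f t p.1 p.2 :=
  continuousOn_univ.mp <| hf.comp_of_mapsTo_Icc continuousOn_const (fun _ _ => ht)
    continuousOn_fst continuousOn_snd

namespace HasContinuousPartials

/-- Differentiation under the integral sign: the `ε`-derivative of the integrand is continuous in
`(ε, t)`, hence bounded on the compact set `closedBall 0 1 ×ˢ [a, b]`. -/
theorem hasDerivAt_integral_add_smul (hf : HasContinuousPartials a b f fy fv) (hab : a ≤ b)
    {Y V η w : ℝ → ℝ} (hY : ContinuousOn Y (Icc a b)) (hV : ContinuousOn V (Icc a b))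
    (hη : ContinuousOn η (Icc a b)) (hw : ContinuousOn w (Icc a b)) :
    HasDerivAt (fun ε : ℝ => ∫ t in a..b, f t (Y t + ε * η t) (V t + ε * w t))
      (∫ t in a..b, (fy t (Y t) (V t) * η t + fv t (Y t) (V t) * w t)) 0 := by
  have hsub : Ι a b ⊆ Icc a b := uIoc_of_le hab ▸ Ioc_subset_Icc_self
  have hF (ε : ℝ) : ContinuousOn (fun t => f t (Y t + ε * η t) (V t + ε * w t)) (Icc a b) :=
    hf.continuousOn.comp_curve_Icc (hY.add (continuousOn_const.mul hη))
      (hV.add (continuousOn_const.mul hw))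
  set F' : ℝ → ℝ → ℝ := fun ε t =>
    fy t (Y t + ε * η t) (V t + ε * w t) * η t + fv t (Y t + ε * η t) (V t + ε * w t) * w t
  have hF' : ContinuousOn (fun p : ℝ × ℝ => F' p.1 p.2) (univ ×ˢ Icc a b) := by
    have hT : MapsTo Prod.snd (univ ×ˢ Icc a b : Set (ℝ × ℝ)) (Icc a b) := fun _ hp => hp.2
    have hY' : ContinuousOn (fun p : ℝ × ℝ => Y p.2 + p.1 * η p.2) (univ ×ˢ Icc a b) :=
      (hY.comp continuousOn_snd hT).add (continuousOn_fst.mul (hη.comp continuousOn_snd hT))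
    have hV' : ContinuousOn (fun p : ℝ × ℝ => V p.2 + p.1 * w p.2) (univ ×ˢ Icc a b) :=
      (hV.comp continuousOn_snd hT).add (continuousOn_fst.mul (hw.comp continuousOn_snd hT))
    exact ((hf.continuousOn_y.comp_of_mapsTo_Icc continuousOn_snd hT hY' hV').mul
      (hη.comp continuousOn_snd hT)).add
      ((hf.continuousOn_v.comp_of_mapsTo_Icc continuousOn_snd hT hY' hV').mul
        (hw.comp continuousOn_snd hT))
  obtain ⟨C, hC⟩ := ((isCompact_closedBall (0 : ℝ) 1).prod
    isCompact_Icc).exists_bound_of_continuousOn (hF'.mono (prod_mono (subset_univ _) subset_rfl))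
  have hF'0 : ContinuousOn (F' 0) (Icc a b) :=
    hF'.comp (continuousOn_const.prodMk continuousOn_id) fun _ ht => ⟨trivial, ht⟩
  have key := intervalIntegral.hasDerivAt_integral_of_dominated_loc_of_deriv_le (F' := F')
    (μ := volume) (bound := fun _ => C) (ball_mem_nhds 0 one_pos)
    (.of_forall fun ε => ((hF ε).mono hsub).aestronglyMeasurable measurableSet_uIoc)
    ((hF 0).intervalIntegrable_of_Icc hab)
    ((hF'0.mono hsub).aestronglyMeasurable measurableSet_uIoc)
    (.of_forall fun t ht ε hε => hC (ε, t) ⟨ball_subset_closedBall hε, hsub ht⟩)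
    intervalIntegrable_const
    (.of_forall fun t ht ε _ => HasDerivAt.comp_of_continuous_partials
      (hf.hasDerivAt_y t (hsub ht)) (hf.hasDerivAt_v t (hsub ht))
      (hf.continuousOn_y.continuous_slice_of_mem_Icc (hsub ht))
      (hf.continuousOn_v.continuous_slice_of_mem_Icc (hsub ht))
      ((hasDerivAt_mul_const _).const_add _) ((hasDerivAt_mul_const _).const_add _))
  simpa [F'] using key.2

theorem hasDerivAt_integralFunctional_add_smul (hf : HasContinuousPartials a b f fy fv)
    (hab : a < b) {x η : ℝ → ℝ} (hx : ContDiffOn ℝ 1 x (Icc a b)) (hη : ContDiff ℝ 1 η) :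
    HasDerivAt (fun ε : ℝ => integralFunctional a b f fun t => x t + ε * η t)
      (∫ t in a..b, (fy t (x t) (derivWithin x (Icc a b) t) * η t +
        fv t (x t) (derivWithin x (Icc a b) t) * deriv η t)) 0 := by
  have hUD := uniqueDiffOn_Icc hab
  have hderiv (ε : ℝ) {t : ℝ} (ht : t ∈ Icc a b) :
      derivWithin (fun t => x t + ε * η t) (Icc a b) t =
        derivWithin x (Icc a b) t + ε * deriv η t :=
    ((hx.differentiableOn one_ne_zero t ht).hasDerivWithinAt.add
      ((hη.differentiable one_ne_zero t).hasDerivAt.const_mul ε).hasDerivWithinAt).derivWithin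
      (hUD t ht)
  have hL : (fun ε : ℝ => integralFunctional a b f fun t => x t + ε * η t) = fun ε =>
      ∫ t in a..b, f t (x t + ε * η t) (derivWithin x (Icc a b) t + ε * deriv η t) :=
    funext fun ε => intervalIntegral.integral_congr fun t ht => by
      rw [uIcc_of_le hab.le] at ht
      simp only [hderiv ε ht]
  rw [hL]
  exact hf.hasDerivAt_integral_add_smul hab.le hx.continuousOn
    (hx.continuousOn_derivWithin hUD le_rfl) hη.continuous.continuousOn
    (hη.continuous_deriv le_rfl).continuousOn

end HasContinuousPartials

theorem hasDerivAt_mul_integralFunctional_add_smul {f₁ f₁y f₁v f₂ f₂y f₂v : ℝ → ℝ → ℝ → ℝ}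
    (h₁ : HasContinuousPartials a b f₁ f₁y f₁v) (h₂ : HasContinuousPartials a b f₂ f₂y f₂v)
    (hab : a < b) {x η : ℝ → ℝ} (hx : ContDiffOn ℝ 1 x (Icc a b)) (hη : ContDiff ℝ 1 η) :
    HasDerivAt (fun ε : ℝ => (integralFunctional a b f₁ fun t => x t + ε * η t) *
        integralFunctional a b f₂ fun t => x t + ε * η t)
      (∫ t in a..b,
        ((integralFunctional a b f₂ x * f₁y t (x t) (derivWithin x (Icc a b) t) +
          integralFunctional a b f₁ x * f₂y t (x t) (derivWithin x (Icc a b) t)) * η t +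
        (integralFunctional a b f₂ x * f₁v t (x t) (derivWithin x (Icc a b) t) +
          integralFunctional a b f₁ x * f₂v t (x t) (derivWithin x (Icc a b) t)) * deriv η t))
      0 := by
  have hX := hx.continuousOn_derivWithin (uniqueDiffOn_Icc hab) le_rfl
  have hint {f fy fv : ℝ → ℝ → ℝ → ℝ} (hf : HasContinuousPartials a b f fy fv) :
      IntervalIntegrable (fun t => fy t (x t) (derivWithin x (Icc a b) t) * η t +
        fv t (x t) (derivWithin x (Icc a b) t) * deriv η t) volume a b :=
    (((hf.continuousOn_y.comp_curve_Icc hx.continuousOn hX).mul hη.continuous.continuousOn).add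
      ((hf.continuousOn_v.comp_curve_Icc hx.continuousOn hX).mul
        (hη.continuous_deriv le_rfl).continuousOn)).intervalIntegrable_of_Icc hab.le
  refine ((h₁.hasDerivAt_integralFunctional_add_smul hab hx hη).mul
    (h₂.hasDerivAt_integralFunctional_add_smul hab hx hη)).congr_deriv ?_
  simp only [zero_mul, add_zero]
  rw [mul_comm, ← intervalIntegral.integral_const_mul, ← intervalIntegral.integral_const_mul,
    ← intervalIntegral.integral_add ((hint h₁).const_mul _) ((hint h₂).const_mul _)]
  congr 1 with t
  ring

end Lagrangian

theorem C1Norm_const_mul {a b : ℝ} {η : ℝ → ℝ} (hη : DifferentiableOn ℝ η (Icc a b)) (ε : ℝ) :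
    C1Norm a b (fun t => ε * η t) = |ε| * C1Norm a b η := by
  have hd (t : Icc a b) : derivWithin (fun t => ε * η t) (Icc a b) t =
      ε * derivWithin η (Icc a b) t := derivWithin_const_mul ε (hη t t.2)
  simp only [C1Norm, hd, abs_mul, ← Real.mul_iSup_of_nonneg (abs_nonneg ε), mul_add]

theorem eventually_C1Norm_const_mul_lt {a b δ : ℝ} {η : ℝ → ℝ}
    (hη : DifferentiableOn ℝ η (Icc a b)) (hδ : 0 < δ) :
    ∀ᶠ ε in 𝓝 (0 : ℝ), C1Norm a b (fun t => ε * η t) < δ := by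
  simp only [C1Norm_const_mul hη]
  exact ((continuous_abs.mul continuous_const).tendsto' 0 0 (by simp)).eventually_lt_const hδ

theorem isLocalExtr_add_smul_of_weak_extr {L : (ℝ → ℝ) → ℝ} {a b xb : ℝ} {xE η : ℝ → ℝ}
    (hext :
      (∃ δ > 0, ∀ x : ℝ → ℝ, ContDiffOn ℝ 1 x (Icc a b) →
        x b = xb → C1Norm a b (fun t => x t - xE t) < δ → L xE ≤ L x) ∨
      (∃ δ > 0, ∀ x : ℝ → ℝ, ContDiffOn ℝ 1 x (Icc a b) →
        x b = xb → C1Norm a b (fun t => x t - xE t) < δ → L x ≤ L xE))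
    (hxE : ContDiffOn ℝ 1 xE (Icc a b)) (hxEb : xE b = xb) (hη : ContDiff ℝ 1 η)
    (hηb : η b = 0) :
    IsLocalExtr (fun ε : ℝ => L fun t => xE t + ε * η t) 0 := by
  have hC1 (ε : ℝ) : ContDiffOn ℝ 1 (fun t => xE t + ε * η t) (Icc a b) :=
    hxE.add (contDiff_const.mul hη).contDiffOn
  have hend (ε : ℝ) : xE b + ε * η b = xb := by simp [hηb, hxEb]
  have hclose {δ : ℝ} (hδ : 0 < δ) :
      ∀ᶠ ε in 𝓝 (0 : ℝ), C1Norm a b (fun t => (xE t + ε * η t) - xE t) < δ := by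
    simpa using eventually_C1Norm_const_mul_lt (hη.differentiable one_ne_zero).differentiableOn hδ
  have h0 : (L fun t => xE t + 0 * η t) = L xE := by simp
  rcases hext with ⟨δ, hδ, hmin⟩ | ⟨δ, hδ, hmax⟩
  · exact IsMinFilter.isExtr <| (hclose hδ).mono fun ε hε =>
      h0.trans_le (hmin _ (hC1 ε) (hend ε) hε)
  · exact IsMaxFilter.isExtr <| (hclose hδ).mono fun ε hε =>
      (hmax _ (hC1 ε) (hend ε) hε).trans_eq h0.symm

/-- Natural boundary condition at `a` for the product functional
`L[x] = F₁[x] · F₂[x]` when `x(a)` is free and `x(b) = x_b` is fixed. -/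
theorem product_natural_boundary_left
    (a b : ℝ) (hab : a < b)
    (f1 f1y f1v f2 f2y f2v : ℝ → ℝ → ℝ → ℝ)
    (hf1_cont : ContinuousOn (fun p : ℝ × ℝ × ℝ => f1 p.1 p.2.1 p.2.2)
      (Set.Icc a b ×ˢ (Set.univ : Set ℝ) ×ˢ (Set.univ : Set ℝ)))
    (hf2_cont : ContinuousOn (fun p : ℝ × ℝ × ℝ => f2 p.1 p.2.1 p.2.2)
      (Set.Icc a b ×ˢ (Set.univ : Set ℝ) ×ˢ (Set.univ : Set ℝ)))
    (hf1y : ∀ t ∈ Set.Icc a b, ∀ y v : ℝ,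
      HasDerivAt (fun y' => f1 t y' v) (f1y t y v) y)
    (hf1v : ∀ t ∈ Set.Icc a b, ∀ y v : ℝ,
      HasDerivAt (fun v' => f1 t y v') (f1v t y v) v)
    (hf2y : ∀ t ∈ Set.Icc a b, ∀ y v : ℝ,
      HasDerivAt (fun y' => f2 t y' v) (f2y t y v) y)
    (hf2v : ∀ t ∈ Set.Icc a b, ∀ y v : ℝ,
      HasDerivAt (fun v' => f2 t y v') (f2v t y v) v)
    (hf1y_cont : ContinuousOn (fun p : ℝ × ℝ × ℝ => f1y p.1 p.2.1 p.2.2)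
      (Set.Icc a b ×ˢ (Set.univ : Set ℝ) ×ˢ (Set.univ : Set ℝ)))
    (hf1v_cont : ContinuousOn (fun p : ℝ × ℝ × ℝ => f1v p.1 p.2.1 p.2.2)
      (Set.Icc a b ×ˢ (Set.univ : Set ℝ) ×ˢ (Set.univ : Set ℝ)))
    (hf2y_cont : ContinuousOn (fun p : ℝ × ℝ × ℝ => f2y p.1 p.2.1 p.2.2)
      (Set.Icc a b ×ˢ (Set.univ : Set ℝ) ×ˢ (Set.univ : Set ℝ)))
    (hf2v_cont : ContinuousOn (fun p : ℝ × ℝ × ℝ => f2v p.1 p.2.1 p.2.2)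
      (Set.Icc a b ×ˢ (Set.univ : Set ℝ) ×ˢ (Set.univ : Set ℝ)))
    (xb : ℝ) (xE : ℝ → ℝ)
    (hxE : ContDiffOn ℝ 1 xE (Set.Icc a b))
    (hxEb : xE b = xb)
    (F1 F2 : (ℝ → ℝ) → ℝ)
    (hF1 : ∀ x, F1 x = ∫ t in a..b, f1 t (x t) (derivWithin x (Set.Icc a b) t))
    (hF2 : ∀ x, F2 x = ∫ t in a..b, f2 t (x t) (derivWithin x (Set.Icc a b) t))
    (L : (ℝ → ℝ) → ℝ)
    (hL : ∀ x, L x = F1 x * F2 x)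
    (hext :
      (∃ δ > 0, ∀ x : ℝ → ℝ, ContDiffOn ℝ 1 x (Set.Icc a b) →
        x b = xb → C1Norm a b (fun t => x t - xE t) < δ → L xE ≤ L x) ∨
      (∃ δ > 0, ∀ x : ℝ → ℝ, ContDiffOn ℝ 1 x (Set.Icc a b) →
        x b = xb → C1Norm a b (fun t => x t - xE t) < δ → L x ≤ L xE)) :
    F2 xE * f1v a (xE a) (derivWithin xE (Set.Icc a b) a) +
      F1 xE * f2v a (xE a) (derivWithin xE (Set.Icc a b) a) = 0 := by
  obtain rfl : L = fun x => F1 x * F2 x := funext hL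
  obtain rfl : F1 = integralFunctional a b f1 := funext hF1
  obtain rfl : F2 = integralFunctional a b f2 := funext hF2
  have h₁ : HasContinuousPartials a b f1 f1y f1v := ⟨hf1_cont, hf1y, hf1v, hf1y_cont, hf1v_cont⟩
  have h₂ : HasContinuousPartials a b f2 f2y f2v := ⟨hf2_cont, hf2y, hf2v, hf2y_cont, hf2v_cont⟩
  have hX := hxE.continuousOn_derivWithin (uniqueDiffOn_Icc hab) le_rfl
  have hc {k : ℝ → ℝ → ℝ → ℝ}
      (hk : ContinuousOn (fun p : ℝ × ℝ × ℝ => k p.1 p.2.1 p.2.2) (Icc a b ×ˢ univ ×ˢ univ)) :=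
    hk.comp_curve_Icc hxE.continuousOn hX
  refine eq_zero_left_of_integral_mul_add_mul_deriv_eq_zero hab ?_ ?_ fun η hη hηb =>
    (isLocalExtr_add_smul_of_weak_extr (L := fun x => integralFunctional a b f1 x *
      integralFunctional a b f2 x) hext hxE hxEb hη hηb).hasDerivAt_eq_zero
      (hasDerivAt_mul_integralFunctional_add_smul h₁ h₂ hab hxE hη)
  · exact (continuousOn_const.mul (hc hf1y_cont)).add (continuousOn_const.mul (hc hf2y_cont))
  · exact (continuousOn_const.mul (hc hf1v_cont)).add (continuousOn_const.mul (hc hf2v_cont))
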